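/- Let α > −1 and α + β ≥ 1/2. Then there is a constant C = C(α,β) such that χ_E(t,x,z) Ψ_t^{α,β}(x,z) ≤ C χ_E(t,x,z) Φ_t^{α,β}(x,z) for all (t,x,z) ∈ (0,∞)^3. -/
import Mathlib


open MeasureTheory Set Filter
open scoped ENNReal NNReal

noncomputable def PhiE (a b t x z : ℝ) : ℝ :=
  if |x - z| < t ∧ t < x + z then
    (x * z) ^ (-a - 1/2) * t ^ (-(2*a) - 2*b) * (t ^ 2 - (x - z) ^ 2) ^ (a + b - 1/2)
  else 0

noncomputable def PhiF (a b t x z : ℝ) : ℝ :=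
  if x + z < t then t ^ (-(2*a) - 2*b) * (t ^ 2 - (x - z) ^ 2) ^ (b - 1) else 0

noncomputable def PhiK (a b t x z : ℝ) : ℝ := PhiE a b t x z + PhiF a b t x z

noncomputable def PsiE (a b t x z : ℝ) : ℝ :=
  if |x - z| < t ∧ t < x + z then
    (x * z) ^ (-(2*a) - b) * t ^ (-(2*a) - 2*b) *
      ((t ^ 2 - (x - z) ^ 2) * ((x + z) ^ 2 - t ^ 2)) ^ (a + b - 1/2)
  else 0

noncomputable def PsiF (a b t x z : ℝ) : ℝ :=
  if x + z < t then
    t ^ (-(2*a) - 2*b) * (t ^ 2 - (x - z) ^ 2) ^ (-a - 1/2) *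
      (t ^ 2 - (x + z) ^ 2) ^ (a + b - 1/2)
  else 0

noncomputable def PsiK (a b t x z : ℝ) : ℝ := PsiE a b t x z + PsiF a b t x z

/-- χ_E Ψ ≲ χ_E Φ when α + β ≥ 1/2. -/
theorem psi_le_phi_on_E (a b : ℝ) (ha : -1 < a) (hab : 1/2 ≤ a + b) :
    ∃ C : ℝ, 0 < C ∧ ∀ t x z : ℝ, 0 < t → 0 < x → 0 < z →
      (if |x - z| < t ∧ t < x + z then PsiK a b t x z else 0) ≤
        C * (if |x - z| < t ∧ t < x + z then PhiK a b t x z else 0) := by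
  refine ⟨4 ^ (a + b - 1/2), Real.rpow_pos_of_pos (by norm_num) _, ?_⟩
  intro t x z ht hx hz
  by_cases hE : |x - z| < t ∧ t < x + z
  · rw [if_pos hE, if_pos hE]
    obtain ⟨h1, h2⟩ := hE
    have hxz : 0 < x * z := mul_pos hx hz
    have habs : |x - z| < t := h1
    have hA : 0 < t ^ 2 - (x - z) ^ 2 := by
      have := abs_nonneg (x - z)
      nlinarith [sq_abs (x - z)]
    have hB : 0 < (x + z) ^ 2 - t ^ 2 := by nlinarith
    have hBle : (x + z) ^ 2 - t ^ 2 ≤ 4 * (x * z) := by nlinarith [h1.le, abs_nonneg (x - z)]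
    have hs : (0:ℝ) ≤ a + b - 1/2 := by linarith
    unfold PsiK PhiK PsiE PhiE PsiF PhiF
    rw [if_pos (⟨h1, h2⟩ : |x - z| < t ∧ t < x + z),
      if_neg (by linarith : ¬ x + z < t),
      if_pos (⟨h1, h2⟩ : |x - z| < t ∧ t < x + z),
      if_neg (by linarith : ¬ x + z < t), add_zero, add_zero]
    have hmul : ((t ^ 2 - (x - z) ^ 2) * ((x + z) ^ 2 - t ^ 2)) ^ (a + b - 1/2)
        = (t ^ 2 - (x - z) ^ 2) ^ (a + b - 1/2) * ((x + z) ^ 2 - t ^ 2) ^ (a + b - 1/2) :=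
      Real.mul_rpow hA.le hB.le
    have hsplit : (x * z) ^ (-(2*a) - b) = (x * z) ^ (-a - 1/2) * (x * z) ^ (-(a + b - 1/2)) := by
      rw [← Real.rpow_add hxz]; ring_nf
    have hQ : (x * z) ^ (-(a + b - 1/2)) * ((x + z) ^ 2 - t ^ 2) ^ (a + b - 1/2)
        ≤ 4 ^ (a + b - 1/2) := by
      rw [Real.rpow_neg hxz.le, inv_mul_eq_div, ← Real.div_rpow hB.le hxz.le]
      have hd : ((x + z) ^ 2 - t ^ 2) / (x * z) ≤ 4 := by
        rw [div_le_iff₀ hxz]; linarith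
      exact Real.rpow_le_rpow (div_nonneg hB.le hxz.le) hd hs
    have hP : 0 ≤ (x * z) ^ (-a - 1/2) * t ^ (-(2*a) - 2*b)
        * (t ^ 2 - (x - z) ^ 2) ^ (a + b - 1/2) := by positivity
    calc (x * z) ^ (-(2*a) - b) * t ^ (-(2*a) - 2*b) *
          ((t ^ 2 - (x - z) ^ 2) * ((x + z) ^ 2 - t ^ 2)) ^ (a + b - 1/2)
        = ((x * z) ^ (-a - 1/2) * t ^ (-(2*a) - 2*b) * (t ^ 2 - (x - z) ^ 2) ^ (a + b - 1/2))
            * ((x * z) ^ (-(a + b - 1/2)) * ((x + z) ^ 2 - t ^ 2) ^ (a + b - 1/2)) := by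
          rw [hmul, hsplit]; ring
      _ ≤ ((x * z) ^ (-a - 1/2) * t ^ (-(2*a) - 2*b) * (t ^ 2 - (x - z) ^ 2) ^ (a + b - 1/2))
            * 4 ^ (a + b - 1/2) := by
          exact mul_le_mul_of_nonneg_left hQ hP
      _ = 4 ^ (a + b - 1/2) *
            ((x * z) ^ (-a - 1/2) * t ^ (-(2*a) - 2*b) * (t ^ 2 - (x - z) ^ 2) ^ (a + b - 1/2)) := by
          ring
  · simp [hE]
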